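/- arXiv:0903.2058 — 2 statements merged into one kernel-verified Lean document; each statement's English description precedes it below -/
import Mathlib

section
/- Let L be the root lattice of type A₁₁ ⊕ E₆ ⊕ A₁ ⊕ A₁ and N = ℤλ ⊕ L with λ² = 2. With generators labeled as follows: e₁,…,e₆ span E₆, e₇,…,e₁₇ span A₁₁, e₁₈ and e₁₉ span the two A₁'s, let u = (Σ_{i=1}^{11} i·e_{i+6})/2 + e₁₈/2 + e₁₉/2. Then u·w ∈ ℤ for all w ∈ N and u·u ∈ 2ℤ, so N + ℤu is an even overlattice of N of index 2. -/
/-!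
Pairing with `u` only sees three coordinates, `u · w = -6 w₁₇ - w₁₈ - w₁₉`, so `u` is integral
on `N` and `u · u = -34`. The lattice `N` is even because its Gram matrix is integral and
symmetric with even diagonal, hence alternating modulo 2. Then
`(w + n u)² = w² + 2 n (u · w) + n² u²` is even, and since `2 u ∈ N` while `u ∉ N` (its
`e₁₈`-coefficient is `1/2`), `N` has index 2 in `N + ℤ u`.
-/

open Matrix

/-- Dynkin-diagram edges for E₆ ⊕ A₁₁ ⊕ A₁ ⊕ A₁ (index 0 reserved for λ):
E₆ on e₁,…,e₆ with branch node e₄ (edges e₁–e₃, e₃–e₄, e₄–e₅, e₅–e₆, e₂–e₄),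
A₁₁ chain e₇,…,e₁₇, and A₁'s e₁₈, e₁₉. -/
def adj : List (ℕ × ℕ) :=
  [(1,3),(3,4),(4,5),(5,6),(2,4),
   (7,8),(8,9),(9,10),(10,11),(11,12),(12,13),(13,14),(14,15),(15,16),(16,17)]

/-- Gram matrix of N = ℤλ ⊕ L: λ² = 2, roots of square −2, adjacent roots pair to 1. -/
def gramN : Matrix (Fin 20) (Fin 20) ℚ := fun i j =>
  if i = j then (if i.val = 0 then 2 else -2)
  else if (i.val, j.val) ∈ adj ∨ (j.val, i.val) ∈ adj then 1 else 0

/-- The bilinear form extended ℚ-bilinearly. -/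
def form (x y : Fin 20 → ℚ) : ℚ := x ⬝ᵥ gramN.mulVec y

/-- The lattice N: integer coordinate vectors. -/
def IntLat : AddSubgroup (Fin 20 → ℚ) where
  carrier := {x | ∀ i, ∃ k : ℤ, x i = (k : ℚ)}
  zero_mem' := fun i => ⟨0, by simp⟩
  add_mem' := by
    intro a b ha hb i
    obtain ⟨p, hp⟩ := ha i; obtain ⟨q, hq⟩ := hb i
    exact ⟨p + q, by simp [hp, hq]⟩
  neg_mem' := by
    intro a ha i
    obtain ⟨p, hp⟩ := ha i
    exact ⟨-p, by simp [hp]⟩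

/-- u = (Σ_{i=1}^{11} i·e_{i+6})/2 + e₁₈/2 + e₁₉/2. -/
def u : Fin 20 → ℚ :=
  ![0, 0,0,0,0,0,0, 1/2,1,3/2,2,5/2,3,7/2,4,9/2,5,11/2, 1/2,1/2]

/-- The overlattice N + ℤu. -/
def M : AddSubgroup (Fin 20 → ℚ) := IntLat ⊔ AddSubgroup.zmultiples u

theorem RingHom.map_dotProduct_mulVec {ι R S : Type*} [Fintype ι] [CommRing R] [CommRing S]
    (f : R →+* S) (A : Matrix ι ι R) (v w : ι → R) :
    f (v ⬝ᵥ A *ᵥ w) = (f ∘ v) ⬝ᵥ A.map f *ᵥ (f ∘ w) := by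
  rw [RingHom.map_dotProduct]
  congr 1
  exact funext (RingHom.map_mulVec f A w)

theorem Matrix.dotProduct_mulVec_self_eq_zero {ι R : Type*} [Fintype ι] [CommRing R]
    (A : Matrix ι ι R) (hA : ∀ i j, A j i = -A i j) (hdiag : ∀ i, A i i = 0) (v : ι → R) :
    v ⬝ᵥ A *ᵥ v = 0 := by
  have hsum : v ⬝ᵥ A *ᵥ v = ∑ p ∈ Finset.univ ×ˢ Finset.univ, v p.1 * A p.1 p.2 * v p.2 := by
    simp only [dotProduct, mulVec, Finset.mul_sum, Finset.sum_product, mul_assoc]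
  rw [hsum]
  refine Finset.sum_ninvolution Prod.swap (fun p => ?_) (fun ⟨i, j⟩ hp hswap => hp ?_) (by simp)
    Prod.swap_swap
  · rw [Prod.fst_swap, Prod.snd_swap, hA]
    ring
  · obtain rfl : j = i := (Prod.ext_iff.mp hswap).1
    simp [hdiag]

/-- Reduced mod 2, such a matrix is alternating. -/
theorem Matrix.even_dotProduct_mulVec_self {ι : Type*} [Fintype ι] (G : Matrix ι ι ℤ)
    (hG : G.IsSymm) (hdiag : ∀ i, Even (G i i)) (v : ι → ℤ) : Even (v ⬝ᵥ G *ᵥ v) := by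
  let f := Int.castRingHom (ZMod 2)
  have hmod : f (v ⬝ᵥ G *ᵥ v) = 0 := by
    rw [RingHom.map_dotProduct_mulVec]
    refine Matrix.dotProduct_mulVec_self_eq_zero _ (fun i j => ?_) (fun i => ?_) _
    · rw [map_apply, map_apply, hG.apply i j, ZMod.neg_eq_self_mod_two]
    · exact (ZMod.intCast_eq_zero_iff_even).mpr (hdiag i)
  simpa [f, ZMod.intCast_eq_zero_iff_even] using hmod

namespace AddSubgroup

variable {G : Type*} [AddCommGroup G] {H : AddSubgroup G} {g : G}

theorem zsmul_mem_iff_even (hg : g ∉ H) (h2g : (2 : ℤ) • g ∈ H) (n : ℤ) :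
    n • g ∈ H ↔ Even n := by
  rcases Int.even_or_odd' n with ⟨k, rfl | rfl⟩
  · simpa [mul_comm, mul_zsmul] using H.zsmul_mem h2g k
  · simp only [Int.not_even_two_mul_add_one, iff_false, add_zsmul, one_zsmul]
    rw [H.add_mem_cancel_left (by simpa [mul_comm, mul_zsmul] using H.zsmul_mem h2g k)]
    exact hg

theorem relIndex_sup_zmultiples_eq_two (hg : g ∉ H) (h2g : (2 : ℤ) • g ∈ H) :
    H.relIndex (H ⊔ zmultiples g) = 2 := by
  refine relIndex_eq_two_iff.mpr ⟨g, mem_sup_right (mem_zmultiples g), fun b hb => ?_⟩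
  obtain ⟨h, hh, _, ⟨n, rfl⟩, rfl⟩ := mem_sup.mp hb
  simp only [add_assoc, H.add_mem_cancel_left hh]
  rw [← add_one_zsmul, zsmul_mem_iff_even hg h2g, zsmul_mem_iff_even hg h2g, Int.even_add_one]
  by_cases hn : Even n <;> simp [hn]

end AddSubgroup

def gramZ : Matrix (Fin 20) (Fin 20) ℤ := fun i j =>
  if i = j then (if i.val = 0 then 2 else -2)
  else if (i.val, j.val) ∈ adj ∨ (j.val, i.val) ∈ adj then 1 else 0

lemma gramN_eq_map_gramZ : gramN = gramZ.map (↑) := by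
  ext i j
  simp only [gramN, gramZ, map_apply]
  split_ifs <;> norm_num

lemma gramZ_isSymm : gramZ.IsSymm := by
  decide

lemma form_comm (x y : Fin 20 → ℚ) : form x y = form y x := by
  have hsymm : gramNᵀ = gramN := by
    rw [gramN_eq_map_gramZ, ← transpose_map, gramZ_isSymm.eq]
  rw [form, form, dotProduct_mulVec, ← mulVec_transpose, hsymm, dotProduct_comm]

lemma form_add_zsmul_self (x y : Fin 20 → ℚ) (n : ℤ) :
    form (x + n • y) (x + n • y) = form x x + 2 * n * form y x + n ^ 2 * form y y := by
  have hcomm := form_comm x y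
  rw [← Int.cast_smul_eq_zsmul ℚ]
  simp only [form, mulVec_add, mulVec_smul, dotProduct_add, add_dotProduct, dotProduct_smul,
    smul_dotProduct, smul_eq_mul] at hcomm ⊢
  rw [hcomm]
  ring

lemma even_form_self_of_mem_IntLat {w : Fin 20 → ℚ} (hw : w ∈ IntLat) :
    ∃ k : ℤ, form w w = 2 * k := by
  choose v hv using hw
  obtain ⟨k, hk⟩ := gramZ.even_dotProduct_mulVec_self gramZ_isSymm (by decide) v
  refine ⟨k, ?_⟩
  rw [funext hv, form, gramN_eq_map_gramZ]
  have hcast := RingHom.map_dotProduct_mulVec (Int.castRingHom ℚ) gramZ v v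
  rw [hk] at hcast
  simpa [two_mul, Function.comp_def] using hcast.symm

lemma vecMul_u_gramN :
    u ᵥ* gramN = (-6 : ℚ) • Pi.single 17 1 - Pi.single 18 1 - Pi.single 19 1 := by
  decide +kernel

lemma form_u_eq (w : Fin 20 → ℚ) : form u w = -6 * w 17 - w 18 - w 19 := by
  rw [form, dotProduct_mulVec, vecMul_u_gramN]
  simp only [sub_dotProduct, smul_dotProduct, single_one_dotProduct, smul_eq_mul]

lemma form_u_u : form u u = -34 := by
  rw [form_u_eq]
  decide +kernel

lemma exists_form_u_eq_intCast {w : Fin 20 → ℚ} (hw : w ∈ IntLat) : ∃ k : ℤ, form u w = k := by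
  obtain ⟨a, ha⟩ := hw 17
  obtain ⟨b, hb⟩ := hw 18
  obtain ⟨c, hc⟩ := hw 19
  exact ⟨-6 * a - b - c, by rw [form_u_eq, ha, hb, hc]; push_cast; ring⟩

lemma u_not_mem_IntLat : u ∉ IntLat := by
  rintro hu
  obtain ⟨k, hk⟩ := hu 18
  have : (2 * k : ℚ) = 1 := by rw [← hk, show u 18 = 1 / 2 from rfl]; norm_num
  have : 2 * k = 1 := by exact_mod_cast this
  omega

lemma two_zsmul_u_mem_IntLat : (2 : ℤ) • u ∈ IntLat := by
  have hden : ∀ i, (((2 : ℤ) • u) i).den = 1 := by decide +kernel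
  exact fun i => ⟨_, (Rat.coe_int_num_of_den_eq_one (hden i)).symm⟩

/-- u pairs integrally with N and has even square, so N + ℤu is an
even overlattice of N of index 2. -/
theorem E6_A11_2A1_overlattice :
    (∀ w ∈ IntLat, ∃ k : ℤ, form u w = (k : ℚ)) ∧
    (∃ k : ℤ, form u u = 2 * (k : ℚ)) ∧
    (∀ x ∈ M, ∃ k : ℤ, form x x = 2 * (k : ℚ)) ∧
    IntLat.relIndex M = 2 := by
  refine ⟨fun w hw => exists_form_u_eq_intCast hw, ⟨-17, by rw [form_u_u]; norm_num⟩, ?_,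
    AddSubgroup.relIndex_sup_zmultiples_eq_two u_not_mem_IntLat two_zsmul_u_mem_IntLat⟩
  intro x hx
  obtain ⟨w, hw, _, ⟨n, rfl⟩, rfl⟩ := AddSubgroup.mem_sup.mp hx
  obtain ⟨a, ha⟩ := even_form_self_of_mem_IntLat hw
  obtain ⟨m, hm⟩ := exists_form_u_eq_intCast hw
  refine ⟨a + n * m - 17 * n ^ 2, ?_⟩
  rw [form_add_zsmul_self, ha, hm, form_u_u]
  push_cast
  ring
end

section
/- Let Q be the conic x₁x₂ − x₀x₁ − x₀x₂ = 0 and let C_μ be the conic x₁x₂ − x₀x₁ − x₀x₂ + μ x₀² = 0 for μ ≠ 0. Then Q and C_μ meet only at the two points (0:1:0) and (0:0:1), each with intersection multiplicity 2. -/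
/-!
Since `C μ = Q + μ x₀²`, a common zero of `Q` and `C μ` has `x₀ = 0` when `μ ≠ 0`, and on the line
`x₀ = 0` the form `Q` reduces to `x₁x₂`, leaving only `(0:1:0)` and `(0:0:1)`. The correction
`μ x₀²` vanishes to second order along that line, so there the differentials of `Q` and `C μ`
coincide: the two conics are tangent at both points.
-/

/-- The conic Q: x₁x₂ − x₀x₁ − x₀x₂ = 0. -/
def Q (x : Fin 3 → ℂ) : ℂ := x 1 * x 2 - x 0 * x 1 - x 0 * x 2

/-- The conic C_μ: x₁x₂ − x₀x₁ − x₀x₂ + μx₀² = 0. -/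
def C (μ : ℂ) (x : Fin 3 → ℂ) : ℂ := x 1 * x 2 - x 0 * x 1 - x 0 * x 2 + μ * (x 0) ^ 2

/-- The two conics are tangent at p: both are smooth at p (nonzero
differential) and their differentials are proportional, so the local
intersection multiplicity is ≥ 2; since by Bézout the total intersection
number of two conics is 4 and there are exactly two intersection points,
each multiplicity is exactly 2. -/
def TangentAt (μ : ℂ) (p : Fin 3 → ℂ) : Prop :=
  Q p = 0 ∧ C μ p = 0 ∧
  fderiv ℂ Q p ≠ 0 ∧ fderiv ℂ (C μ) p ≠ 0 ∧
  ¬ LinearIndependent ℂ ![fderiv ℂ Q p, fderiv ℂ (C μ) p]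

theorem C_eq_Q_add (μ : ℂ) (x : Fin 3 → ℂ) : C μ x = Q x + μ * x 0 ^ 2 := by
  unfold C Q; ring

theorem differentiable_Q : Differentiable ℂ Q := by
  unfold Q; fun_prop

theorem hasFDerivAt_coord (i : Fin 3) (p : Fin 3 → ℂ) :
    HasFDerivAt (fun x : Fin 3 → ℂ => x i) (ContinuousLinearMap.proj i : (Fin 3 → ℂ) →L[ℂ] ℂ) p :=
  hasFDerivAt_apply i p

theorem fderiv_Q_apply (p v : Fin 3 → ℂ) :
    fderiv ℂ Q p v = p 1 * v 2 + p 2 * v 1 - p 0 * (v 1 + v 2) - (p 1 + p 2) * v 0 := by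
  have h := (hasFDerivAt_coord · p)
  have hQ : HasFDerivAt Q _ p := (((h 1).mul (h 2)).sub ((h 0).mul (h 1))).sub ((h 0).mul (h 2))
  rw [hQ.fderiv]
  simp only [sub_apply, add_apply, smul_apply, ContinuousLinearMap.proj_apply, smul_eq_mul]
  ring

theorem fderiv_C_eq_fderiv_Q {μ : ℂ} {p : Fin 3 → ℂ} (hp : p 0 = 0) :
    fderiv ℂ (C μ) p = fderiv ℂ Q p := by
  have hsq := ((hasFDerivAt_coord 0 p).pow 2).const_mul μ
  have hC : C μ = Q + fun x => μ * x 0 ^ 2 := funext (C_eq_Q_add μ)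
  rw [hC, ((differentiable_Q p).hasFDerivAt.add hsq).fderiv]
  ext v
  simp [hp]

theorem tangentAt_of_apply_zero_eq_zero (μ : ℂ) {p : Fin 3 → ℂ} (hp : p 0 = 0) (hQ : Q p = 0)
    (hdQ : fderiv ℂ Q p ≠ 0) : TangentAt μ p := by
  have hdC := fderiv_C_eq_fderiv_Q (μ := μ) hp
  refine ⟨hQ, by rw [C_eq_Q_add, hQ, hp]; ring, hdQ, hdC ▸ hdQ, fun h => ?_⟩
  simpa [hdC] using h.injective.ne (show (0 : Fin 2) ≠ 1 by decide)

theorem apply_zero_eq_zero_of_Q_eq_zero_of_C_eq_zero {μ : ℂ} (hμ : μ ≠ 0) {x : Fin 3 → ℂ}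
    (hQ : Q x = 0) (hC : C μ x = 0) : x 0 = 0 := by
  rw [C_eq_Q_add, hQ, zero_add] at hC
  simpa [hμ] using hC

theorem eq_smul_or_eq_smul_of_Q_eq_zero {x : Fin 3 → ℂ} (hx : x 0 = 0) (hQ : Q x = 0) :
    x = x 1 • ![0, 1, 0] ∨ x = x 2 • ![0, 0, 1] := by
  have h12 : x 1 * x 2 = 0 := by simpa [Q, hx] using hQ
  rcases mul_eq_zero.1 h12 with h | h
  · right; funext i; fin_cases i <;> simp [hx, h]
  · left; funext i; fin_cases i <;> simp [hx, h]

/-- for μ ≠ 0, Q and C_μ meet only at (0:1:0) and (0:0:1),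
and at each of these two points they are tangent (intersection multiplicity 2). -/
theorem Q_meets_Cmu (μ : ℂ) (hμ : μ ≠ 0) :
    (∀ x : Fin 3 → ℂ, x ≠ 0 → Q x = 0 → C μ x = 0 →
      (∃ t : ℂ, x = t • ![0, 1, 0]) ∨ (∃ t : ℂ, x = t • ![0, 0, 1])) ∧
    TangentAt μ ![0, 1, 0] ∧ TangentAt μ ![0, 0, 1] := by
  refine ⟨fun x _ hQ hC => ?_, ?_, ?_⟩
  · have hx := apply_zero_eq_zero_of_Q_eq_zero_of_C_eq_zero hμ hQ hC
    exact (eq_smul_or_eq_smul_of_Q_eq_zero hx hQ).imp (⟨_, ·⟩) (⟨_, ·⟩)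
  · refine tangentAt_of_apply_zero_eq_zero μ (by simp) (by simp [Q]) fun h => ?_
    simpa [fderiv_Q_apply] using congrArg (· ![0, 0, 1]) h
  · refine tangentAt_of_apply_zero_eq_zero μ (by simp) (by simp [Q]) fun h => ?_
    simpa [fderiv_Q_apply] using congrArg (· ![0, 1, 0]) h
end
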